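/- arXiv:2103.11948 — 2 statements merged into one kernel-verified Lean document; each statement's English description precedes it below -/
import Mathlib

section
/- In the one-period binomial market, suppose u > γ > d and up + d(1−p) > γ, and fix λ ∈ (0,∞). Then a* := log( p(u − γ) / (−(1−p)(d − γ)) ) / (λ(u − d)) is strictly positive, is the unique maximizer of a ↦ U_λ(G(a)) over a ∈ (0,∞), and satisfies U_λ(G(a*)) > 0. -/
/-! The criterion `E[e^{-λG(a)}]` for `a ≥ 0` is the Laplace transform
`F(a) = p e^{-αa} + (1-p) e^{βa}` of a two-point law, with `α = λ(u-γ)` and `β = λ(γ-d)`.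
Since `e^x ≥ 1 + x`, `F` lies strictly above its horizontal tangent at the critical point
`a* = log(pα/((1-p)β))/(α+β)`, which is therefore its unique minimiser; the drift condition
`pα > (1-p)β` makes `a*` positive, and `F(a*) < F(0) = 1` gives `U_λ(G(a*)) > 0`. -/

open MeasureTheory ENNReal Real Filter Set

noncomputable section

variable {Ω : Type*}

/-- Entropic utility `U_l(X) = -(1/l) * log E[exp (-l * X)]`, valued in `EReal`
(so that it takes values in `[-∞, ∞)` when `l > 0`). -/
def entU {mΩ : MeasurableSpace Ω} (P : Measure Ω) (l : ℝ) (X : Ω → ℝ) : EReal :=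
  (- ENNReal.log (∫⁻ ω, ENNReal.ofReal (Real.exp (-l * X ω)) ∂P)) * ((1 / l : ℝ) : EReal)

/-- Gain of the position `a` in the one-period binomial market with proportional
transaction cost `γ`: `G(a) = a * R - γ * |a|`. -/
def binGain (γ : ℝ) (R : Ω → ℝ) (a : ℝ) (ω : Ω) : ℝ :=
  a * R ω - γ * |a|

def twoPointLaplace (p q α β a : ℝ) : ℝ :=
  p * Real.exp (-(α * a)) + q * Real.exp (β * a)

lemma twoPointLaplace_pos {p q : ℝ} (hp : 0 < p) (hq : 0 < q) (α β a : ℝ) :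
    0 < twoPointLaplace p q α β a := by
  unfold twoPointLaplace; positivity

lemma twoPointLaplace_zero (p q α β : ℝ) : twoPointLaplace p q α β 0 = p + q := by
  simp [twoPointLaplace]

lemma twoPointLaplace_lt_of_deriv_eq_zero {p q α β s a : ℝ} (hp : 0 < p) (hq : 0 < q)
    (hβ : β ≠ 0) (hs : p * α * Real.exp (-(α * s)) = q * β * Real.exp (β * s)) (ha : a ≠ s) :
    twoPointLaplace p q α β s < twoPointLaplace p q α β a := by
  have hA : p * Real.exp (-(α * s)) * (1 - α * (a - s)) ≤ p * Real.exp (-(α * a)) := by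
    rw [show -(α * a) = -(α * s) + -(α * (a - s)) by ring, Real.exp_add, mul_assoc]
    gcongr
    linarith [Real.add_one_le_exp (-(α * (a - s)))]
  have hB : q * Real.exp (β * s) * (1 + β * (a - s)) < q * Real.exp (β * a) := by
    rw [show β * a = β * s + β * (a - s) by ring, Real.exp_add, mul_assoc]
    gcongr
    linarith [Real.add_one_lt_exp (mul_ne_zero hβ (sub_ne_zero.mpr ha))]
  unfold twoPointLaplace
  linear_combination hA + hB + (a - s) * hs

lemma twoPointLaplace_lt_of_ne_argmin {p q α β a : ℝ} (hp : 0 < p) (hq : 0 < q)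
    (hα : 0 < α) (hβ : 0 < β) (ha : a ≠ Real.log (p * α / (q * β)) / (α + β)) :
    twoPointLaplace p q α β (Real.log (p * α / (q * β)) / (α + β)) <
      twoPointLaplace p q α β a := by
  set s := Real.log (p * α / (q * β)) / (α + β)
  refine twoPointLaplace_lt_of_deriv_eq_zero hp hq hβ.ne' ?_ ha
  have hexp : Real.exp ((α + β) * s) = p * α / (q * β) := by
    rw [mul_div_cancel₀ _ (by positivity : α + β ≠ 0), Real.exp_log (by positivity)]
  have hsplit : Real.exp (β * s) = Real.exp ((α + β) * s) * Real.exp (-(α * s)) := by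
    rw [← Real.exp_add]; ring_nf
  rw [hsplit, hexp]
  field_simp

lemma ae_eq_or_eq_of_measure_add_eq_one {mΩ : MeasurableSpace Ω} {P : Measure Ω}
    [IsProbabilityMeasure P] {R : Ω → ℝ} (hR : Measurable R) {u d : ℝ} (hud : u ≠ d)
    (h : P {ω | R ω = u} + P {ω | R ω = d} = 1) :
    ∀ᵐ ω ∂P, R ω = u ∨ R ω = d := by
  have hdisj : Disjoint {ω | R ω = u} {ω | R ω = d} :=
    Set.disjoint_left.mpr fun ω hu hd => hud (hu.symm.trans hd)
  have hmeas : MeasurableSet {ω | R ω = u ∨ R ω = d} :=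
    (hR (measurableSet_singleton u)).union (hR (measurableSet_singleton d))
  rw [ae_iff_measure_eq hmeas.nullMeasurableSet, ofPred_or,
    measure_union hdisj (hR (measurableSet_singleton d)), h, measure_univ]

lemma lintegral_comp_of_ae_eq_or_eq {mΩ : MeasurableSpace Ω} {P : Measure Ω} {R : Ω → ℝ}
    (hR : Measurable R) {u d : ℝ} (hud : u ≠ d) (hae : ∀ᵐ ω ∂P, R ω = u ∨ R ω = d)
    (g : ℝ → ℝ≥0∞) :
    ∫⁻ ω, g (R ω) ∂P = g u * P {ω | R ω = u} + g d * P {ω | R ω = d} := by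
  have hu : MeasurableSet {ω | R ω = u} := hR (measurableSet_singleton u)
  have hd : MeasurableSet {ω | R ω = d} := hR (measurableSet_singleton d)
  calc ∫⁻ ω, g (R ω) ∂P
      = ∫⁻ ω, ({ω | R ω = u}.indicator (fun _ => g u) ω
          + {ω | R ω = d}.indicator (fun _ => g d) ω) ∂P := by
        refine lintegral_congr_ae ?_
        filter_upwards [hae] with ω hω
        rcases hω with h | h <;> simp [h, hud, hud.symm]
    _ = g u * P {ω | R ω = u} + g d * P {ω | R ω = d} := by
        rw [lintegral_add_left (measurable_const.indicator hu), lintegral_indicator_const hu,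
          lintegral_indicator_const hd]

lemma entU_eq_of_lintegral_eq_ofReal {mΩ : MeasurableSpace Ω} {P : Measure Ω} {l y : ℝ}
    {X : Ω → ℝ} (hX : ∫⁻ ω, ENNReal.ofReal (Real.exp (-l * X ω)) ∂P = ENNReal.ofReal y)
    (hy : 0 < y) :
    entU P l X = ((-Real.log y * (1 / l) : ℝ) : EReal) := by
  rw [entU, hX, ENNReal.log_ofReal_of_pos hy, ← EReal.coe_neg, ← EReal.coe_mul]

lemma entU_binGain_eq {mΩ : MeasurableSpace Ω} {P : Measure Ω} [IsProbabilityMeasure P]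
    {u d γ p : ℝ} (hud : u ≠ d) (hp0 : 0 < p) (hp1 : p < 1) {R : Ω → ℝ} (hR : Measurable R)
    (hRu : P {ω | R ω = u} = ENNReal.ofReal p)
    (hRd : P {ω | R ω = d} = ENNReal.ofReal (1 - p)) (l : ℝ) {a : ℝ} (ha : 0 ≤ a) :
    entU P l (binGain γ R a) =
      ((-Real.log (twoPointLaplace p (1 - p) (l * (u - γ)) (l * (γ - d)) a) * (1 / l) : ℝ) :
        EReal) := by
  have hae : ∀ᵐ ω ∂P, R ω = u ∨ R ω = d := by
    refine ae_eq_or_eq_of_measure_add_eq_one hR hud ?_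
    rw [hRu, hRd, ← ENNReal.ofReal_add hp0.le (by linarith)]
    simp
  refine entU_eq_of_lintegral_eq_ofReal ?_ (twoPointLaplace_pos hp0 (by linarith) _ _ a)
  simp only [binGain, abs_of_nonneg ha]
  rw [lintegral_comp_of_ae_eq_or_eq hR hud hae
      (fun x => ENNReal.ofReal (Real.exp (-l * (a * x - γ * a)))), hRu, hRd,
    ← ENNReal.ofReal_mul (by positivity), ← ENNReal.ofReal_mul (by positivity),
    ← ENNReal.ofReal_add (by positivity) (by positivity), twoPointLaplace]
  congr 1
  ring_nf

theorem stmt_16_general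
    {mΩ : MeasurableSpace Ω} (P : Measure Ω) [IsProbabilityMeasure P]
    (u d γ p : ℝ) (hud : d < u) (hp0 : 0 < p) (hp1 : p < 1)
    (R : Ω → ℝ) (hR : Measurable R)
    (hRu : P {ω | R ω = u} = ENNReal.ofReal p)
    (hRd : P {ω | R ω = d} = ENNReal.ofReal (1 - p))
    (l : ℝ) (hl : 0 < l) (hγu : γ < u) (hdγ : d < γ) (hdrift : γ < u * p + d * (1 - p)) :
    let astar : ℝ := Real.log (p * (u - γ) / (-((1 - p) * (d - γ)))) / (l * (u - d))
    0 < astar ∧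
      (∀ a : ℝ, 0 < a → entU P l (binGain γ R a) ≤ entU P l (binGain γ R astar)) ∧
      (∀ a : ℝ, 0 < a → a ≠ astar → entU P l (binGain γ R a) < entU P l (binGain γ R astar)) ∧
      0 < entU P l (binGain γ R astar) := by
  intro astar
  have hq : 0 < 1 - p := by linarith
  have hα : 0 < l * (u - γ) := mul_pos hl (by linarith)
  have hβ : 0 < l * (γ - d) := mul_pos hl (by linarith)
  have hastar : astar = Real.log (p * (l * (u - γ)) / ((1 - p) * (l * (γ - d))))
      / (l * (u - γ) + l * (γ - d)) := by
    simp only [astar, show -((1 - p) * (d - γ)) = (1 - p) * (γ - d) by ring]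
    congr 2
    · field_simp
    · ring
  have hpos : 0 < astar := by
    refine div_pos (Real.log_pos ?_) (mul_pos hl (by linarith))
    rw [one_lt_div (by nlinarith)]
    nlinarith
  have hU := fun a (ha : 0 ≤ a) => entU_binGain_eq (γ := γ) hud.ne' hp0 hp1 hR hRu hRd l ha
  have hlt : ∀ a, 0 ≤ a → a ≠ astar →
      entU P l (binGain γ R a) < entU P l (binGain γ R astar) := by
    intro a ha hne
    rw [hU a ha, hU astar hpos.le, EReal.coe_lt_coe_iff, hastar]
    rw [hastar] at hne
    exact mul_lt_mul_of_pos_right (neg_lt_neg (Real.log_lt_log (twoPointLaplace_pos hp0 hq _ _ _)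
      (twoPointLaplace_lt_of_ne_argmin hp0 hq hα hβ hne))) (by positivity)
  have hzero : entU P l (binGain γ R 0) = 0 := by
    rw [hU 0 le_rfl, twoPointLaplace_zero]
    simp
  refine ⟨hpos, fun a ha => ?_, fun a ha => hlt a ha.le, hzero ▸ hlt 0 le_rfl hpos.ne⟩
  rcases eq_or_ne a astar with rfl | hne
  · exact le_rfl
  · exact (hlt a ha.le hne).le

/-- In the one-period binomial market with `u > γ > d` and
`up + d(1-p) > γ`, the point `a* = log(p(u-γ)/(-(1-p)(d-γ)))/(λ(u-d))` is strictly positive,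
uniquely maximizes `a ↦ U_λ(G(a))` over `(0,∞)`, and satisfies `U_λ(G(a*)) > 0`. -/
theorem stmt_16
    {mΩ : MeasurableSpace Ω} (P : Measure Ω) [IsProbabilityMeasure P]
    (u d γ p : ℝ) (hud : d < u) (hγ : 0 < γ) (hp0 : 0 < p) (hp1 : p < 1)
    (R : Ω → ℝ) (hR : Measurable R)
    (hRu : P {ω | R ω = u} = ENNReal.ofReal p)
    (hRd : P {ω | R ω = d} = ENNReal.ofReal (1 - p))
    (l : ℝ) (hl : 0 < l) (hγu : γ < u) (hdγ : d < γ) (hdrift : γ < u * p + d * (1 - p)) :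
    let astar : ℝ := Real.log (p * (u - γ) / (-((1 - p) * (d - γ)))) / (l * (u - d))
    0 < astar ∧
      (∀ a : ℝ, 0 < a → entU P l (binGain γ R a) ≤ entU P l (binGain γ R astar)) ∧
      (∀ a : ℝ, 0 < a → a ≠ astar → entU P l (binGain γ R a) < entU P l (binGain γ R astar)) ∧
      0 < entU P l (binGain γ R astar) :=
  stmt_16_general (mΩ := mΩ) P u d γ p hud hp0 hp1 R hR hRu hRd l hl hγu hdγ hdrift
end
end

section
/- In the one-period binomial market, for every λ ∈ (0,∞): sup over a ∈ ℝ of U_λ(G(a)) is strictly positive if and only if |up + d(1−p)| > γ; and if |up + d(1−p)| ≤ γ then the supremum equals 0 and is attained at a = 0. -/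
/-!
With `m = u p + d (1 - p)`, the utility of position `a` is
`-(1/λ) log F(a)` where `F(a) = E[exp(-λ G(a))]`, so it is positive exactly when `F(a) < 1`.
By Jensen, `F(a) ≥ exp(-λ (a m - γ |a|)) ≥ 1` whenever `|m| ≤ γ`, and `F(0) = 1`.
If `γ < |m|`, then on the side `a > 0` (say `γ < m`) the function `F` is smooth with
right derivative `-λ (m - γ) < 0` at `0`, so `F(a) < 1` for some small `a > 0`;
the case `m < -γ` is its mirror image under `a ↦ -a`, `(u, d) ↦ (-u, -d)`.
-/

open MeasureTheory ENNReal Real Filter Set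

noncomputable section

variable {Ω : Type*}

theorem HasDerivAt.exists_gt_lt_of_neg {f : ℝ → ℝ} {f' x : ℝ} (hf : HasDerivAt f f' x)
    (hf' : f' < 0) : ∃ y, x < y ∧ f y < f x := by
  obtain ⟨y, hslope, hxy⟩ :=
    ((hf.hasDerivWithinAt.liminf_right_slope_le hf').and_eventually self_mem_nhdsWithin).exists
  refine ⟨y, hxy, ?_⟩
  have hdiff := mul_neg_of_neg_of_pos hslope (sub_pos.2 hxy)
  rw [slope_def_field, div_mul_cancel₀ _ (sub_ne_zero.2 hxy.ne')] at hdiff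
  linarith

theorem lintegral_comp_eq_of_two_point {mΩ : MeasurableSpace Ω} {P : Measure Ω}
    [IsProbabilityMeasure P] {R : Ω → ℝ} {u d p : ℝ} (hud : u ≠ d) (hR : Measurable R)
    (hRu : P {ω | R ω = u} = ENNReal.ofReal p) (hRd : P {ω | R ω = d} = ENNReal.ofReal (1 - p))
    (f : ℝ → ℝ≥0∞) :
    ∫⁻ ω, f (R ω) ∂P = ENNReal.ofReal p * f u + ENNReal.ofReal (1 - p) * f d := by
  set A := {ω | R ω = u}
  set B := {ω | R ω = d}
  have hA : MeasurableSet A := hR (measurableSet_singleton u)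
  have hB : MeasurableSet B := hR (measurableSet_singleton d)
  have hdisj : Disjoint A B := Set.disjoint_left.2 fun ω hu hd => hud (hu.symm.trans hd)
  have hnull : P (A ∪ B)ᶜ = 0 := by
    rw [measure_compl (hA.union hB) (measure_ne_top _ _), measure_union hdisj hB, hRu, hRd,
      measure_univ]
    exact tsub_eq_zero_of_le (by simpa using ENNReal.ofReal_add_le (p := p) (q := 1 - p))
  rw [← lintegral_add_compl _ (hA.union hB), setLIntegral_measure_zero _ _ hnull, add_zero,
    lintegral_union hB hdisj, setLIntegral_congr_fun hA fun ω (hω : R ω = u) => by rw [hω],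
    setLIntegral_congr_fun hB fun ω (hω : R ω = d) => by rw [hω], setLIntegral_const,
    setLIntegral_const, hRu, hRd, mul_comm, mul_comm (f d)]

/-- `E[exp(-l G(a))]` when the return takes the value `u` with probability `p` and `d`
otherwise. -/
def binExpLoss (p l γ u d a : ℝ) : ℝ :=
  p * exp (-l * (a * u - γ * |a|)) + (1 - p) * exp (-l * (a * d - γ * |a|))

section binExpLoss

variable {p l γ u d : ℝ}

theorem binExpLoss_zero : binExpLoss p l γ u d 0 = 1 := by
  simp [binExpLoss]

theorem binExpLoss_neg (a : ℝ) : binExpLoss p l γ u d (-a) = binExpLoss p l γ (-u) (-d) a := by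
  simp only [binExpLoss, abs_neg, neg_mul, mul_neg]

theorem exp_le_binExpLoss (hp0 : 0 ≤ p) (hp1 : p ≤ 1) (a : ℝ) :
    exp (-l * (a * (u * p + d * (1 - p)) - γ * |a|)) ≤ binExpLoss p l γ u d a := by
  have hjensen := convexOn_exp.2 (mem_univ (-l * (a * u - γ * |a|)))
    (mem_univ (-l * (a * d - γ * |a|))) hp0 (sub_nonneg.2 hp1) (add_sub_cancel p 1)
  simp only [smul_eq_mul] at hjensen
  exact le_of_eq_of_le (congrArg exp (by ring)) hjensen

theorem binExpLoss_pos (hp0 : 0 ≤ p) (hp1 : p ≤ 1) (a : ℝ) : 0 < binExpLoss p l γ u d a :=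
  (exp_pos _).trans_le (exp_le_binExpLoss hp0 hp1 a)

theorem one_le_binExpLoss (hp0 : 0 ≤ p) (hp1 : p ≤ 1) (hl : 0 ≤ l)
    (hm : |u * p + d * (1 - p)| ≤ γ) (a : ℝ) : 1 ≤ binExpLoss p l γ u d a := by
  have ham : a * (u * p + d * (1 - p)) ≤ γ * |a| :=
    calc a * (u * p + d * (1 - p)) ≤ |a| * |u * p + d * (1 - p)| := by
          rw [← abs_mul]; exact le_abs_self _
      _ ≤ γ * |a| := by rw [mul_comm γ]; exact mul_le_mul_of_nonneg_left hm (abs_nonneg a)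
  calc 1 ≤ exp (-l * (a * (u * p + d * (1 - p)) - γ * |a|)) :=
        one_le_exp (by nlinarith)
    _ ≤ binExpLoss p l γ u d a := exp_le_binExpLoss hp0 hp1 a

theorem exists_pos_binExpLoss_lt_one (hl : 0 < l) (hm : γ < u * p + d * (1 - p)) :
    ∃ a, 0 < a ∧ binExpLoss p l γ u d a < 1 := by
  set g : ℝ → ℝ := fun y => p * exp (-l * (u - γ) * y) + (1 - p) * exp (-l * (d - γ) * y)
  have hg : HasDerivAt g (p * (-l * (u - γ)) + (1 - p) * (-l * (d - γ))) 0 := by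
    have hu := ((hasDerivAt_id (0 : ℝ)).const_mul (-l * (u - γ))).exp.const_mul p
    have hd := ((hasDerivAt_id (0 : ℝ)).const_mul (-l * (d - γ))).exp.const_mul (1 - p)
    simpa [g] using hu.fun_add hd
  obtain ⟨a, ha, hlt⟩ := hg.exists_gt_lt_of_neg (by nlinarith)
  refine ⟨a, ha, ?_⟩
  convert hlt using 1
  · simp only [binExpLoss, g, abs_of_pos ha]
    ring_nf
  · simp [g]

theorem exists_binExpLoss_lt_one_iff (hp0 : 0 ≤ p) (hp1 : p ≤ 1) (hl : 0 < l) :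
    (∃ a, binExpLoss p l γ u d a < 1) ↔ γ < |u * p + d * (1 - p)| := by
  refine ⟨fun ⟨a, ha⟩ => ?_, fun hm => ?_⟩
  · by_contra! hm
    exact (one_le_binExpLoss hp0 hp1 hl.le hm a).not_gt ha
  rcases lt_abs.1 hm with hm | hm
  · obtain ⟨a, -, ha⟩ := exists_pos_binExpLoss_lt_one hl hm
    exact ⟨a, ha⟩
  · obtain ⟨a, -, ha⟩ :=
      exists_pos_binExpLoss_lt_one (p := p) (γ := γ) (u := -u) (d := -d) hl (by linarith)
    exact ⟨-a, by rwa [binExpLoss_neg]⟩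

end binExpLoss

theorem entU_binGain {mΩ : MeasurableSpace Ω} {P : Measure Ω} [IsProbabilityMeasure P]
    {R : Ω → ℝ} {u d p : ℝ} (hud : u ≠ d) (hR : Measurable R)
    (hRu : P {ω | R ω = u} = ENNReal.ofReal p) (hRd : P {ω | R ω = d} = ENNReal.ofReal (1 - p))
    (hp0 : 0 ≤ p) (hp1 : p ≤ 1) (l γ a : ℝ) :
    entU P l (binGain γ R a) = ((-Real.log (binExpLoss p l γ u d a) / l : ℝ) : EReal) := by
  have hint := lintegral_comp_eq_of_two_point hud hR hRu hRd
    fun x => ENNReal.ofReal (exp (-l * (a * x - γ * |a|)))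
  rw [← ENNReal.ofReal_mul hp0, ← ENNReal.ofReal_mul (sub_nonneg.2 hp1),
    ← ENNReal.ofReal_add (by positivity) (mul_nonneg (sub_nonneg.2 hp1) (exp_nonneg _))] at hint
  simp only [entU, binGain]
  rw [hint, ← binExpLoss, ENNReal.log_ofReal_of_pos (binExpLoss_pos hp0 hp1 a)]
  norm_cast
  ring

theorem stmt_18_general
    {mΩ : MeasurableSpace Ω} (P : Measure Ω) [IsProbabilityMeasure P]
    (u d γ p : ℝ) (hud : d < u) (hp0 : 0 < p) (hp1 : p < 1)
    (R : Ω → ℝ) (hR : Measurable R)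
    (hRu : P {ω | R ω = u} = ENNReal.ofReal p)
    (hRd : P {ω | R ω = d} = ENNReal.ofReal (1 - p))
    (l : ℝ) (hl : 0 < l) :
    ((0 < ⨆ a : ℝ, entU P l (binGain γ R a)) ↔ γ < |u * p + d * (1 - p)|) ∧
      (|u * p + d * (1 - p)| ≤ γ →
        (⨆ a : ℝ, entU P l (binGain γ R a)) = 0 ∧ entU P l (binGain γ R 0) = 0) := by
  have hent := entU_binGain hud.ne' hR hRu hRd hp0.le hp1.le l γ
  constructor
  · rw [lt_iSup_iff, ← exists_binExpLoss_lt_one_iff hp0.le hp1.le hl]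
    refine exists_congr fun a => ?_
    rw [hent, EReal.coe_pos, div_pos_iff_of_pos_right hl, neg_pos,
      log_neg_iff (binExpLoss_pos hp0.le hp1.le a)]
  · intro hm
    have h0 : entU P l (binGain γ R 0) = 0 := by simp [hent, binExpLoss_zero]
    refine ⟨le_antisymm (iSup_le fun a => ?_) ?_, h0⟩
    · rw [hent, EReal.coe_nonpos, neg_div, neg_nonpos]
      exact div_nonneg (log_nonneg (one_le_binExpLoss hp0.le hp1.le hl.le hm a)) hl.le
    · exact h0 ▸ le_iSup (fun a => entU P l (binGain γ R a)) 0

/-- In the one-period binomial market, for every `λ ∈ (0,∞)`: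
`sup_a U_λ(G(a)) > 0` iff `|up + d(1-p)| > γ`; and if `|up + d(1-p)| ≤ γ` then the supremum
equals `0` and is attained at `a = 0`. -/
theorem stmt_18
    {mΩ : MeasurableSpace Ω} (P : Measure Ω) [IsProbabilityMeasure P]
    (u d γ p : ℝ) (hud : d < u) (hγ : 0 < γ) (hp0 : 0 < p) (hp1 : p < 1)
    (R : Ω → ℝ) (hR : Measurable R)
    (hRu : P {ω | R ω = u} = ENNReal.ofReal p)
    (hRd : P {ω | R ω = d} = ENNReal.ofReal (1 - p))
    (l : ℝ) (hl : 0 < l) :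
    ((0 < ⨆ a : ℝ, entU P l (binGain γ R a)) ↔ γ < |u * p + d * (1 - p)|) ∧
      (|u * p + d * (1 - p)| ≤ γ →
        (⨆ a : ℝ, entU P l (binGain γ R a)) = 0 ∧ entU P l (binGain γ R 0) = 0) :=
  stmt_18_general (mΩ := mΩ) P u d γ p hud hp0 hp1 R hR hRu hRd l hl
end
end
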